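/- Assume b_1 = (B_1)_{n,1} ≠ 0. Write det(ζ·I − B(z)) = ζ^n + c_1(z) ζ^{n−1} + ⋯ + c_n(z) with c_1, …, c_n ∈ ℂ[[z]]. Then c_i(0) = 0 for every 1 ≤ i ≤ n and the z-adic valuation of c_n is exactly 1; consequently this polynomial in ζ is an Eisenstein polynomial at the maximal ideal (z) of ℂ[[z]] and is irreducible over the field of formal Laurent series ℂ((z)). -/

import Mathlib

/-!
Modulo `z` the matrix `B(z)` reduces to the nilpotent Jordan block `J`, whose characteristic
polynomial is `ζⁿ`; hence every non-leading coefficient of `det(ζI - B(z))` lies in `(z)`.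
The first column of `B(z)` vanishes outside its last row, so expanding along it gives
`cₙ = -B(z)ₙ₁ · det(minor)`, and the minor reduces modulo `z` to the identity; thus
`cₙ ≡ -b₁ z mod z²`. Eisenstein's criterion at the prime `(z)` and Gauss's lemma for the
integrally closed ring `ℂ[[z]]` then give irreducibility over `ℂ((z))`.
-/

open Polynomial

namespace Matrix

def nilpotentJordanBlock (R : Type*) [Zero R] [One R] (n : ℕ) : Matrix (Fin n) (Fin n) R :=
  of fun i j => if (i : ℕ) + 1 = j then 1 else 0

variable {R : Type*} [CommRing R]

theorem charpoly_eq_X_pow_of_isUpperTriangular {n : Type*} [Fintype n] [DecidableEq n]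
    [LinearOrder n] {M : Matrix n n R} (hM : M.IsUpperTriangular) (hdiag : ∀ i, M i i = 0) :
    M.charpoly = X ^ Fintype.card n := by
  simp [charpoly_of_isUpperTriangular M hM, hdiag]

theorem charpoly_nilpotentJordanBlock (n : ℕ) : (nilpotentJordanBlock R n).charpoly = X ^ n := by
  rw [charpoly_eq_X_pow_of_isUpperTriangular, Fintype.card_fin]
  · intro i j (hji : j < i)
    simp [nilpotentJordanBlock, show (i : ℕ) + 1 ≠ j by omega]
  · simp [nilpotentJordanBlock]

theorem nilpotentJordanBlock_submatrix_succAbove_last_succ (m : ℕ) :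
    (nilpotentJordanBlock R (m + 1)).submatrix (Fin.last m).succAbove Fin.succ = 1 := by
  ext i j
  simp [nilpotentJordanBlock, one_apply, Fin.ext_iff]

theorem det_succ_column_zero_of_eq_zero {n : ℕ} {A : Matrix (Fin (n + 1)) (Fin (n + 1)) R}
    (i : Fin (n + 1)) (hA : ∀ k ≠ i, A k 0 = 0) :
    A.det = (-1) ^ (i : ℕ) * A i 0 * (A.submatrix i.succAbove Fin.succ).det := by
  rw [det_succ_column_zero, Finset.sum_eq_single i (fun k _ hk => by simp [hA k hk]) (by simp)]

theorem charpoly_coeff_zero_of_column_zero_eq_zero {m : ℕ}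
    {A : Matrix (Fin (m + 1)) (Fin (m + 1)) R} (hA : ∀ k ≠ Fin.last m, A k 0 = 0) :
    A.charpoly.coeff 0 =
      -(A (Fin.last m) 0 * (A.submatrix (Fin.last m).succAbove Fin.succ).det) := by
  have hdet := det_eq_sign_charpoly_coeff A
  rw [Fintype.card_fin, det_succ_column_zero_of_eq_zero _ hA, Fin.val_last, pow_succ] at hdet
  have hsq : ((-1 : R) ^ m) ^ 2 = 1 := by rw [← pow_mul, mul_comm, pow_mul]; simp
  linear_combination (-1) ^ m * hdet - (A.charpoly.coeff 0 +
    A (Fin.last m) 0 * (A.submatrix (Fin.last m).succAbove Fin.succ).det) * hsq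

end Matrix

namespace PowerSeries

variable {R : Type*} [CommRing R]

theorem constantCoeff_charpoly_coeff_eq_zero {n : Type*} [Fintype n] [DecidableEq n]
    {M : Matrix n n R⟦X⟧} (hM : (M.map constantCoeff).charpoly = Polynomial.X ^ Fintype.card n)
    {k : ℕ} (hk : k < Fintype.card n) : constantCoeff (M.charpoly.coeff k) = 0 := by
  rw [← Polynomial.coeff_map, ← Matrix.charpoly_map, hM, Polynomial.coeff_X_pow, if_neg hk.ne]

theorem coeff_one_charpoly_coeff_zero {m : ℕ} {M : Matrix (Fin (m + 1)) (Fin (m + 1)) R⟦X⟧}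
    (hM : M.map constantCoeff = Matrix.nilpotentJordanBlock R (m + 1))
    (hcol : ∀ k ≠ Fin.last m, M k 0 = 0) :
    coeff 1 (M.charpoly.coeff 0) = -coeff 1 (M (Fin.last m) 0) := by
  have hcorner : constantCoeff (M (Fin.last m) 0) = 0 := by
    simpa [Matrix.nilpotentJordanBlock] using congrFun (congrFun hM (Fin.last m)) 0
  have hminor : constantCoeff (M.submatrix (Fin.last m).succAbove Fin.succ).det = 1 := by
    rw [RingHom.map_det, RingHom.mapMatrix_apply, ← Matrix.submatrix_map, hM,
      Matrix.nilpotentJordanBlock_submatrix_succAbove_last_succ, Matrix.det_one]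
  rw [Matrix.charpoly_coeff_zero_of_column_zero_eq_zero hcol, map_neg, coeff_one_mul, hcorner,
    hminor, mul_one, mul_zero, add_zero]

theorem isEisensteinAt_span_X [Nontrivial R] {f : R⟦X⟧[X]} (hf : f.Monic)
    (hmem : ∀ k < f.natDegree, constantCoeff (f.coeff k) = 0)
    (hcoeff : coeff 1 (f.coeff 0) ≠ 0) :
    f.IsEisensteinAt (Ideal.span {X}) where
  leading := by simp [hf.leadingCoeff, Ideal.mem_span_singleton, X_dvd_iff]
  mem hk := by rw [Ideal.mem_span_singleton, X_dvd_iff]; exact hmem _ hk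
  notMem h := by
    rw [Ideal.span_singleton_pow, Ideal.mem_span_singleton, X_pow_dvd_iff] at h
    exact hcoeff (h 1 one_lt_two)

end PowerSeries

theorem Polynomial.Monic.irreducible_map_of_isEisensteinAt {R K : Type*} [CommRing R]
    [IsDomain R] [IsIntegrallyClosed R] [Field K] [Algebra R K] [IsFractionRing R K]
    {f : R[X]} {P : Ideal R}
    (hf : f.Monic) (hP : P.IsPrime) (hE : f.IsEisensteinAt P) (hdeg : 0 < f.natDegree) :
    Irreducible (f.map (algebraMap R K)) :=
  hf.irreducible_iff_irreducible_map_fraction_map.1 (hE.irreducible hP hf.isPrimitive hdeg)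

/-- If `b₁ = (B₁)_{n,1} ≠ 0` then, writing `det(ζI - B(z)) = ζⁿ + c₁(z)ζ^{n-1} + ⋯ + cₙ(z)`,
all `cᵢ(0) = 0`, the `z`-adic valuation of `cₙ` is exactly `1`; consequently the
characteristic polynomial is Eisenstein at the maximal ideal `(z)` of `ℂ[[z]]` and is
irreducible over the Laurent series field `ℂ((z))`. -/
theorem charpoly_eisenstein_irreducible (n : ℕ) (hn : 2 ≤ n)
    (Bc : ℕ → Matrix (Fin n) (Fin n) ℂ)
    (hB0 : ∀ i j : Fin n, Bc 0 i j = if (i : ℕ) + 1 = (j : ℕ) then 1 else 0)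
    (hBrow : ∀ ℓ : ℕ, 1 ≤ ℓ → ∀ i j : Fin n, (i : ℕ) + 1 < n → Bc ℓ i j = 0)
    (hb1 : Bc 1 ⟨n - 1, by omega⟩ ⟨0, by omega⟩ ≠ 0) :
    (∀ i : ℕ, 1 ≤ i → i ≤ n →
      PowerSeries.constantCoeff
        ((Matrix.charpoly (fun i j : Fin n => PowerSeries.mk fun m => Bc m i j)).coeff (n - i))
        = 0) ∧
    PowerSeries.coeff 1
        ((Matrix.charpoly (fun i j : Fin n => PowerSeries.mk fun m => Bc m i j)).coeff 0) ≠ 0 ∧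
    (Matrix.charpoly (fun i j : Fin n => PowerSeries.mk fun m => Bc m i j)).IsEisensteinAt
      (Ideal.span {PowerSeries.X}) ∧
    Irreducible ((Matrix.charpoly (fun i j : Fin n => PowerSeries.mk fun m => Bc m i j)).map
      (algebraMap (PowerSeries ℂ) (LaurentSeries ℂ))) := by
  obtain ⟨m, rfl⟩ : ∃ m, n = m + 1 := ⟨n - 1, by omega⟩
  set M : Matrix (Fin (m + 1)) (Fin (m + 1)) (PowerSeries ℂ) :=
    fun i j => PowerSeries.mk fun k => Bc k i j
  have hJ : M.map PowerSeries.constantCoeff = Matrix.nilpotentJordanBlock ℂ (m + 1) := by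
    ext i j
    change PowerSeries.constantCoeff (PowerSeries.mk fun k => Bc k i j) = _
    simp [hB0, Matrix.nilpotentJordanBlock]
  have hcol : ∀ k ≠ Fin.last m, M k 0 = 0 := by
    intro k hk
    ext (_ | ℓ)
    · simp [M, hB0]
    · simp [M, hBrow (ℓ + 1) ℓ.succ_pos k 0 (by simpa using Fin.val_lt_last hk)]
  have hconst : ∀ k < m + 1, PowerSeries.constantCoeff (M.charpoly.coeff k) = 0 := fun k hk =>
    PowerSeries.constantCoeff_charpoly_coeff_eq_zero
      (by rw [hJ, Matrix.charpoly_nilpotentJordanBlock, Fintype.card_fin]) (by simpa using hk)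
  have hcoeff : PowerSeries.coeff 1 (M.charpoly.coeff 0) ≠ 0 := by
    rw [PowerSeries.coeff_one_charpoly_coeff_zero hJ hcol, neg_ne_zero]
    simpa [M, Fin.last] using hb1
  have hdeg : M.charpoly.natDegree = m + 1 := by
    rw [Matrix.charpoly_natDegree_eq_dim, Fintype.card_fin]
  have hE : M.charpoly.IsEisensteinAt (Ideal.span {PowerSeries.X}) :=
    PowerSeries.isEisensteinAt_span_X M.charpoly_monic (fun k hk => hconst k (hdeg ▸ hk)) hcoeff
  exact ⟨fun i hi _ => hconst _ (by omega), hcoeff, hE,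
    M.charpoly_monic.irreducible_map_of_isEisensteinAt PowerSeries.span_X_isPrime hE
      (by omega)⟩
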